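/- Let k₁ < k₂ < ⋯ be a strictly increasing sequence of positive integers, let (S_n) be a convergent sequence of nonnegative matrices with γ(S_n) ≤ c, and let (X_i) be a sequence of nonnegative square matrices with γ(X_i) ≤ c such that the Hausdorff distance from C(X_i,k_i) to lim_{n→∞} C(S_n,k_i) is at most 1/i for every i. Then the sequence (X_i) is convergent and lim_{i→∞} C(X_i,k) = lim_{n→∞} C(S_n,k) for every positive integer k. -/

import Mathlib

open MeasureTheory Matrix
open scoped Pointwise

noncomputable section

/-- The Cantor set `{0,1}^ℕ`. -/
abbrev Cantor : Type := ℕ → Bool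

/-- Cylinder set of a binary string given as a function `Fin n → Bool`. -/
def cylF {n : ℕ} (x : Fin n → Bool) : Set Cantor := {ω | ∀ i : Fin n, ω i = x i}

/-- Cylinder set of a binary string given as a list. -/
def cyl (x : List Bool) : Set Cantor := {ω | ∀ i : Fin x.length, ω i = x.get i}

/-- `ν` is the fair coin-flipping (uniform product) measure on the Cantor set:
the unique Borel probability measure giving every cylinder of depth `n` mass `2⁻ⁿ`. -/
def IsCoinMeasure (ν : Measure Cantor) : Prop :=
  IsProbabilityMeasure ν ∧ ∀ (n : ℕ) (x : Fin n → Bool), ν (cylF x) = (1 / 2 : ENNReal) ^ n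

/-- `K(k,n)`: nonnegative `k × I` matrices with all row sums `|I|/k` and all column sums `1`. -/
def Kset (k : ℕ) (I : Type) [Fintype I] : Set (Matrix (Fin k) I ℝ) :=
  {M | (∀ i j, 0 ≤ M i j) ∧ (∀ i, ∑ j, M i j = (Fintype.card I : ℝ) / k) ∧
       (∀ j, ∑ i, M i j = 1)}

/-- The `k`-shape `C(S,k) = {M S Mᵀ : M ∈ K(k,n)}` of a square matrix `S`. -/
def matShape {I : Type} [Fintype I] (S : Matrix I I ℝ) (k : ℕ) :
    Set (Matrix (Fin k) (Fin k) ℝ) :=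
  (fun M => M * S * Mᵀ) '' Kset k I

/-- `γ(S)`: the sum of all entries of `S`. -/
def gamma {I : Type} [Fintype I] (S : Matrix I I ℝ) : ℝ := ∑ i, ∑ j, S i j

/-- The entrywise ℓ¹ norm of a matrix. -/
def l1 {k : ℕ} (A : Matrix (Fin k) (Fin k) ℝ) : ℝ := ∑ i, ∑ j, |A i j|

/-- The Hausdorff distance (w.r.t. the entrywise ℓ¹ norm) between `A` and `B` is at most `ε`. -/
def hdistLE {k : ℕ} (A B : Set (Matrix (Fin k) (Fin k) ℝ)) (ε : ℝ) : Prop :=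
  (∀ X ∈ A, ∃ Y ∈ B, l1 (X - Y) ≤ ε) ∧ (∀ Y ∈ B, ∃ X ∈ A, l1 (X - Y) ≤ ε)

/-- Convergence of a sequence of shapes to `L` in the ℓ¹-Hausdorff metric. -/
def ShapeTendsto {k : ℕ} (C : ℕ → Set (Matrix (Fin k) (Fin k) ℝ))
    (L : Set (Matrix (Fin k) (Fin k) ℝ)) : Prop :=
  ∀ ε : ℝ, 0 < ε → ∃ N : ℕ, ∀ n ≥ N, hdistLE (C n) L ε

/-- `C₀(μ,k)`: matrices `M` with `M i j = ∫ fᵢ(x) fⱼ(y) dμ` for a measurable partition of unity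
`f₁,…,f_k` with `∫ fᵢ dν = 1/k`. -/
def mShape0 {α : Type} [MeasurableSpace α] (ν : Measure α) (μ : Measure (α × α)) (k : ℕ) :
    Set (Matrix (Fin k) (Fin k) ℝ) :=
  {M | ∃ f : Fin k → α → ℝ,
    (∀ i, Measurable (f i)) ∧ (∀ i x, 0 ≤ f i x) ∧ (∀ x, ∑ i, f i x = 1) ∧
    (∀ i, ∫ x, f i x ∂ν = 1 / k) ∧
    (∀ i j, M i j = ∫ p, f i p.1 * f j p.2 ∂μ)}

/-- `C(μ,k)`: the topological closure of `C₀(μ,k)`. -/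
def mShape {α : Type} [MeasurableSpace α] (ν : Measure α) (μ : Measure (α × α)) (k : ℕ) :
    Set (Matrix (Fin k) (Fin k) ℝ) := closure (mShape0 ν μ k)

/-- `C_c(μ,k)`: as `C₀(μ,k)` but with continuous witness functions. -/
def mShapeC (ν : Measure Cantor) (μ : Measure (Cantor × Cantor)) (k : ℕ) :
    Set (Matrix (Fin k) (Fin k) ℝ) :=
  {M | ∃ f : Fin k → Cantor → ℝ,
    (∀ i, Continuous (f i)) ∧ (∀ i x, 0 ≤ f i x) ∧ (∀ x, ∑ i, f i x = 1) ∧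
    (∀ i, ∫ x, f i x ∂ν = 1 / k) ∧
    (∀ i j, M i j = ∫ p, f i p.1 * f j p.2 ∂μ)}

open Classical in
/-- The real adjacency matrix of a simple graph. -/
def adjMat {V : Type} [Fintype V] (G : SimpleGraph V) : Matrix V V ℝ :=
  fun a b => if G.Adj a b then 1 else 0

/-- `C₀(G,k) = ‖A_G‖₁⁻¹ ⬝ C(A_G,k)` for a finite graph `G`. -/
def graphShape {V : Type} [Fintype V] (G : SimpleGraph V) (k : ℕ) :
    Set (Matrix (Fin k) (Fin k) ℝ) :=
  (gamma (adjMat G))⁻¹ • matShape (adjMat G) k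

/-- `K̂(k,m)`: characteristic matrices of balanced partitions of `{1,…,m}` into `k` classes. -/
def Khat (k m : ℕ) : Set (Matrix (Fin k) (Fin m) ℝ) :=
  {M | (∀ i j, M i j = 0 ∨ M i j = 1) ∧ (∀ j, ∑ i, M i j = 1) ∧
       (∀ i, ∑ j, M i j = (⌈(m : ℝ) / k⌉₊ : ℝ) ∨ ∑ j, M i j = (⌊(m : ℝ) / k⌋₊ : ℝ))}

/-- `C̃₀(μ,α)`: matrices coming from a measurable partition of unity with `∫ fᵢ dν = αᵢ`. -/
def tShape0 {α : Type} [MeasurableSpace α] (ν : Measure α) (μ : Measure (α × α)) {m : ℕ}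
    (a : Fin m → ℝ) : Set (Matrix (Fin m) (Fin m) ℝ) :=
  {M | ∃ f : Fin m → α → ℝ,
    (∀ i, Measurable (f i)) ∧ (∀ i x, 0 ≤ f i x) ∧ (∀ x, ∑ i, f i x = 1) ∧
    (∀ i, ∫ x, f i x ∂ν = a i) ∧
    (∀ i j, M i j = ∫ p, f i p.1 * f j p.2 ∂μ)}

/-- `C̃(μ,α)`: the topological closure of `C̃₀(μ,α)`. -/
def tShape {α : Type} [MeasurableSpace α] (ν : Measure α) (μ : Measure (α × α)) {m : ℕ}
    (a : Fin m → ℝ) : Set (Matrix (Fin m) (Fin m) ℝ) := closure (tShape0 ν μ a)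

/-- The Hausdorff distance w.r.t. the entrywise ℓ∞ norm between `A` and `B` is at most `ε`. -/
def hdistInfLE {m : ℕ} (A B : Set (Matrix (Fin m) (Fin m) ℝ)) (ε : ℝ) : Prop :=
  (∀ X ∈ A, ∃ Y ∈ B, ∀ i j, |X i j - Y i j| ≤ ε) ∧
  (∀ Y ∈ B, ∃ X ∈ A, ∀ i j, |X i j - Y i j| ≤ ε)

/-!
Every `Q ∈ K(j,n)` is close to a product `R M` with `R ∈ K(j,k)` and `M ∈ K(k,n)`: let `R` give
each row `⌊k/j⌋` columns of its own and spread the remaining `k mod j` columns uniformly, and put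
`M = (j/k) Rᵀ Q`. Then `R M = P Q` where `P = (j/k) R Rᵀ` is column stochastic with diagonal at
least `1 - j/k`, so every column of `Q - R M` has ℓ¹ norm at most `2j/k`. Conjugation by `R` does
not increase the ℓ¹ norm, and `Q ↦ Q S Qᵀ` moves by at most `2γ(S)` times the column error, so the
Hausdorff distance between the `j`-shapes of two matrices is at most the one between their
`k`-shapes plus `4cj/k`. Comparing `Xᵢ` with `Sₙ` through `kᵢ → ∞` gives the theorem.
-/

open Finset Filter Topology

lemma l1_sub_comm {k : ℕ} (A B : Matrix (Fin k) (Fin k) ℝ) : l1 (A - B) = l1 (B - A) := by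
  simp only [l1, Matrix.sub_apply, abs_sub_comm]

lemma l1_add_le {k : ℕ} (A B : Matrix (Fin k) (Fin k) ℝ) : l1 (A + B) ≤ l1 A + l1 B := by
  simp only [l1, Matrix.add_apply, ← sum_add_distrib]
  exact sum_le_sum fun i _ => sum_le_sum fun j _ => abs_add_le _ _

lemma l1_sub_le_add {k : ℕ} (A B C : Matrix (Fin k) (Fin k) ℝ) :
    l1 (A - C) ≤ l1 (A - B) + l1 (B - C) := by
  simpa using l1_add_le (A - B) (B - C)

namespace hdistLE

variable {k : ℕ} {A B C : Set (Matrix (Fin k) (Fin k) ℝ)} {ε ε' : ℝ}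

lemma symm (h : hdistLE A B ε) : hdistLE B A ε :=
  ⟨fun Y hY => (h.2 Y hY).imp fun _ ⟨hX, hd⟩ => ⟨hX, by rwa [l1_sub_comm]⟩,
   fun X hX => (h.1 X hX).imp fun _ ⟨hY, hd⟩ => ⟨hY, by rwa [l1_sub_comm]⟩⟩

lemma trans (h₁ : hdistLE A B ε) (h₂ : hdistLE B C ε') : hdistLE A C (ε + ε') := by
  refine ⟨fun X hX => ?_, fun Z hZ => ?_⟩
  · obtain ⟨Y, hY, hXY⟩ := h₁.1 X hX
    obtain ⟨Z, hZ, hYZ⟩ := h₂.1 Y hY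
    exact ⟨Z, hZ, (l1_sub_le_add X Y Z).trans (add_le_add hXY hYZ)⟩
  · obtain ⟨Y, hY, hYZ⟩ := h₂.2 Z hZ
    obtain ⟨X, hX, hXY⟩ := h₁.2 Y hY
    exact ⟨X, hX, (l1_sub_le_add X Y Z).trans (add_le_add hXY hYZ)⟩

lemma mono (h : hdistLE A B ε) (hε : ε ≤ ε') : hdistLE A B ε' :=
  ⟨fun X hX => (h.1 X hX).imp fun _ ⟨hY, hd⟩ => ⟨hY, hd.trans hε⟩,
   fun Y hY => (h.2 Y hY).imp fun _ ⟨hX, hd⟩ => ⟨hX, hd.trans hε⟩⟩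

end hdistLE

lemma l1_mul_mul_transpose_le {j : ℕ} {I J : Type} [Fintype I] [Fintype J]
    {U : Matrix (Fin j) I ℝ} {V : Matrix (Fin j) J ℝ} {η θ : ℝ}
    (hU : ∀ a, ∑ i, |U i a| ≤ η) (hV : ∀ b, ∑ i, |V i b| ≤ θ) (S : Matrix I J ℝ) :
    l1 (U * S * Vᵀ) ≤ η * θ * ∑ a, ∑ b, |S a b| := by
  have hentry : ∀ i i', |(U * S * Vᵀ) i i'| ≤ ∑ a, ∑ b, |U i a| * |S a b| * |V i' b| := by
    intro i i'
    simp only [mul_apply, transpose_apply, sum_mul]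
    rw [sum_comm]
    refine (abs_sum_le_sum_abs _ _).trans (sum_le_sum fun a _ => ?_)
    refine (abs_sum_le_sum_abs _ _).trans (sum_le_sum fun b _ => ?_)
    simp only [abs_mul, le_refl]
  calc l1 (U * S * Vᵀ) ≤ ∑ i, ∑ i', ∑ a, ∑ b, |U i a| * |S a b| * |V i' b| :=
        sum_le_sum fun i _ => sum_le_sum fun i' _ => hentry i i'
    _ = ∑ i, ∑ a, ∑ i', ∑ b, |U i a| * |S a b| * |V i' b| := sum_congr rfl fun _ _ => sum_comm
    _ = ∑ a, ∑ i, ∑ b, ∑ i', |U i a| * |S a b| * |V i' b| := by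
        rw [sum_comm]; exact sum_congr rfl fun _ _ => sum_congr rfl fun _ _ => sum_comm
    _ = ∑ a, ∑ b, ∑ i, ∑ i', |U i a| * |S a b| * |V i' b| := sum_congr rfl fun _ _ => sum_comm
    _ = ∑ a, ∑ b, (∑ i, |U i a|) * (∑ i', |V i' b|) * |S a b| :=
        sum_congr rfl fun a _ => sum_congr rfl fun b _ => by
          rw [sum_mul_sum, sum_mul]
          exact sum_congr rfl fun _ _ => by rw [sum_mul]; exact sum_congr rfl fun _ _ => by ring
    _ ≤ ∑ a, ∑ b, η * θ * |S a b| :=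
        sum_le_sum fun a _ => sum_le_sum fun b _ => mul_le_mul_of_nonneg_right
          (mul_le_mul (hU a) (hV b) (sum_nonneg fun _ _ => abs_nonneg _)
            ((sum_nonneg fun _ _ => abs_nonneg _).trans (hU a))) (abs_nonneg _)
    _ = η * θ * ∑ a, ∑ b, |S a b| := by simp only [mul_sum]

lemma sum_abs_col_eq_one {j : ℕ} {I : Type} [Fintype I] {Q : Matrix (Fin j) I ℝ}
    (hQ₀ : ∀ i a, 0 ≤ Q i a) (hQ : ∀ a, ∑ i, Q i a = 1) (a : I) : ∑ i, |Q i a| = 1 := by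
  simp only [abs_of_nonneg (hQ₀ _ a), hQ]

lemma l1_mul_mul_transpose_le_l1 {j k : ℕ} {R : Matrix (Fin j) (Fin k) ℝ}
    (hR₀ : ∀ i t, 0 ≤ R i t) (hR : ∀ t, ∑ i, R i t = 1) (Δ : Matrix (Fin k) (Fin k) ℝ) :
    l1 (R * Δ * Rᵀ) ≤ l1 Δ := by
  have hcol : ∀ t, ∑ i, |R i t| ≤ 1 := fun t => (sum_abs_col_eq_one hR₀ hR t).le
  simpa [l1] using l1_mul_mul_transpose_le hcol hcol Δ

lemma l1_conj_sub_conj_le {j : ℕ} {I : Type} [Fintype I] {S : Matrix I I ℝ}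
    (hS : ∀ a b, 0 ≤ S a b) {Q Q' : Matrix (Fin j) I ℝ}
    (hQ₀ : ∀ i a, 0 ≤ Q i a) (hQ : ∀ a, ∑ i, Q i a = 1)
    (hQ'₀ : ∀ i a, 0 ≤ Q' i a) (hQ' : ∀ a, ∑ i, Q' i a = 1) {η : ℝ}
    (hη : ∀ a, ∑ i, |Q i a - Q' i a| ≤ η) :
    l1 (Q * S * Qᵀ - Q' * S * Q'ᵀ) ≤ 2 * η * gamma S := by
  have hsplit : Q * S * Qᵀ - Q' * S * Q'ᵀ = (Q - Q') * S * Qᵀ + Q' * S * (Q - Q')ᵀ := by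
    simp only [Matrix.sub_mul, Matrix.mul_sub, transpose_sub]
    abel
  have hγ : ∑ a, ∑ b, |S a b| = gamma S := by simp only [abs_of_nonneg (hS _ _), gamma]
  have hdiff : ∀ a, ∑ i, |(Q - Q') i a| ≤ η := by simpa only [Matrix.sub_apply] using hη
  have h₁ := l1_mul_mul_transpose_le hdiff (fun a => (sum_abs_col_eq_one hQ₀ hQ a).le) S
  have h₂ := l1_mul_mul_transpose_le (fun a => (sum_abs_col_eq_one hQ'₀ hQ' a).le) hdiff S
  rw [hγ] at h₁ h₂
  rw [hsplit]
  linarith [l1_add_le ((Q - Q') * S * Qᵀ) (Q' * S * (Q - Q')ᵀ)]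

lemma mul_mem_Kset {j k : ℕ} {I : Type} [Fintype I] (hk : 0 < k)
    {R : Matrix (Fin j) (Fin k) ℝ} {M : Matrix (Fin k) I ℝ}
    (hR : R ∈ Kset j (Fin k)) (hM : M ∈ Kset k I) : R * M ∈ Kset j I := by
  obtain ⟨hR₀, hRrow, hRcol⟩ := hR
  obtain ⟨hM₀, hMrow, hMcol⟩ := hM
  refine ⟨fun i a => ?_, fun i => ?_, fun a => ?_⟩
  · rw [mul_apply]
    exact sum_nonneg fun t _ => mul_nonneg (hR₀ i t) (hM₀ t a)
  · simp only [mul_apply]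
    rw [sum_comm]
    simp only [← mul_sum, hMrow, ← sum_mul, hRrow, Fintype.card_fin]
    field_simp
  · simp only [mul_apply]
    rw [sum_comm]
    simp only [← sum_mul, hRcol, one_mul, hMcol]

lemma smul_transpose_mul_mem_Kset {j k : ℕ} {I : Type} [Fintype I] (hj : 0 < j) (hk : 0 < k)
    {R : Matrix (Fin j) (Fin k) ℝ} {Q : Matrix (Fin j) I ℝ}
    (hR : R ∈ Kset j (Fin k)) (hQ : Q ∈ Kset j I) : ((j : ℝ) / k) • (Rᵀ * Q) ∈ Kset k I := by
  obtain ⟨hR₀, hRrow, hRcol⟩ := hR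
  obtain ⟨hQ₀, hQrow, hQcol⟩ := hQ
  refine ⟨fun t a => ?_, fun t => ?_, fun a => ?_⟩
  · rw [Matrix.smul_apply, mul_apply]
    exact mul_nonneg (by positivity) (sum_nonneg fun i _ => mul_nonneg (hR₀ i t) (hQ₀ i a))
  · simp only [Matrix.smul_apply, smul_eq_mul, mul_apply, transpose_apply, ← mul_sum]
    rw [sum_comm]
    simp only [← mul_sum, hQrow, ← sum_mul, hRcol]
    field_simp
  · simp only [Matrix.smul_apply, smul_eq_mul, mul_apply, transpose_apply, ← mul_sum]
    rw [sum_comm]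
    simp only [← sum_mul, hRrow, Fintype.card_fin, ← mul_sum, hQcol]
    field_simp

lemma exists_mem_Kset_sum_sq_ge {j : ℕ} (hj : 0 < j) (k : ℕ) :
    ∃ R ∈ Kset j (Fin k), ∀ i, (k : ℝ) / j - 1 ≤ ∑ t, R i t ^ 2 := by
  have hcard : Fintype.card ((Fin j × Fin (k / j)) ⊕ Fin (k % j)) = k := by
    simp [Nat.div_add_mod]
  let e := Fintype.equivFinOfCardEq hcard
  let R₀ : Matrix (Fin j) ((Fin j × Fin (k / j)) ⊕ Fin (k % j)) ℝ := fun i =>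
    Sum.elim (fun p => if p.1 = i then 1 else 0) (fun _ => 1 / j)
  have hjR : (0 : ℝ) < j := by exact_mod_cast hj
  have hk : (j : ℝ) * (k / j : ℕ) + (k % j : ℕ) = k := by exact_mod_cast Nat.div_add_mod k j
  have hrem : ((k % j : ℕ) : ℝ) < j := by exact_mod_cast Nat.mod_lt k hj
  refine ⟨fun i t => R₀ i (e.symm t), ⟨fun i t => ?_, fun i => ?_, fun t => ?_⟩, fun i => ?_⟩
  · obtain ⟨p | v, rfl⟩ := e.surjective t <;>
      simp only [R₀, Equiv.symm_apply_apply, Sum.elim_inl, Sum.elim_inr] <;> positivity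
  · rw [e.symm.sum_comp (R₀ i), Fintype.sum_sum_type, Fintype.sum_prod_type_right]
    simp only [R₀, Sum.elim_inl, Sum.elim_inr, sum_ite_eq', mem_univ, ↓reduceIte, sum_const,
      card_univ, Fintype.card_fin, nsmul_eq_mul, mul_one]
    field_simp
    linarith
  · obtain ⟨p | v, rfl⟩ := e.surjective t
    · simp [R₀]
    · simp only [R₀, Equiv.symm_apply_apply, Sum.elim_inr, sum_const, card_univ,
        Fintype.card_fin, nsmul_eq_mul]
      field_simp
  · rw [e.symm.sum_comp (fun s => R₀ i s ^ 2), Fintype.sum_sum_type,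
      Fintype.sum_prod_type_right]
    simp only [R₀, Sum.elim_inl, Sum.elim_inr, ite_pow, one_pow, ne_eq, OfNat.ofNat_ne_zero,
      not_false_eq_true, zero_pow, sum_ite_eq', mem_univ, ↓reduceIte, sum_const, card_univ,
      Fintype.card_fin, nsmul_eq_mul, mul_one]
    have hkj : (k : ℝ) / j = (k / j : ℕ) + (k % j : ℕ) / j := by field_simp; linarith
    have hfrac : ((k % j : ℕ) : ℝ) / j < 1 := (div_lt_one hjR).2 hrem
    have hsq : (0 : ℝ) ≤ (k % j : ℕ) * (1 / (j : ℝ)) ^ 2 := by positivity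
    linarith

lemma sum_abs_sub_mul_le {j : ℕ} {I : Type} [Fintype I] {P : Matrix (Fin j) (Fin j) ℝ}
    (hP₀ : ∀ i i', 0 ≤ P i i') (hP : ∀ i', ∑ i, P i i' = 1) {η : ℝ}
    (hdiag : ∀ i, 1 - η ≤ P i i) {Q : Matrix (Fin j) I ℝ}
    (hQ₀ : ∀ i a, 0 ≤ Q i a) (hQ : ∀ a, ∑ i, Q i a = 1) (a : I) :
    ∑ i, |Q i a - (P * Q) i a| ≤ 2 * η := by
  have hcol : ∀ i', ∑ i, |(1 - P) i i'| ≤ 2 * η := by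
    intro i'
    have hoff : ∑ i ∈ univ.erase i', |(1 - P) i i'| = 1 - P i' i' := by
      rw [← hP i', ← add_sum_erase _ _ (mem_univ i'), add_sub_cancel_left]
      refine sum_congr rfl fun i hi => ?_
      rw [Matrix.sub_apply, one_apply_ne (ne_of_mem_erase hi), zero_sub, abs_neg,
        abs_of_nonneg (hP₀ i i')]
    have hle : P i' i' ≤ 1 := hP i' ▸ single_le_sum (fun i _ => hP₀ i i') (mem_univ i')
    rw [← add_sum_erase _ _ (mem_univ i'), hoff, Matrix.sub_apply, one_apply_eq,
      abs_of_nonneg (sub_nonneg.2 hle)]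
    linarith [hdiag i']
  have hfactor : Q - P * Q = (1 - P) * Q := by rw [Matrix.sub_mul, Matrix.one_mul]
  calc ∑ i, |Q i a - (P * Q) i a| = ∑ i, |∑ i', (1 - P) i i' * Q i' a| :=
        sum_congr rfl fun i _ => by rw [← Matrix.sub_apply, hfactor, mul_apply]
    _ ≤ ∑ i, ∑ i', |(1 - P) i i'| * Q i' a := sum_le_sum fun i _ =>
        (abs_sum_le_sum_abs _ _).trans_eq
          (sum_congr rfl fun i' _ => by rw [abs_mul, abs_of_nonneg (hQ₀ i' a)])
    _ = ∑ i', (∑ i, |(1 - P) i i'|) * Q i' a := by rw [sum_comm]; simp only [sum_mul]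
    _ ≤ ∑ i', 2 * η * Q i' a :=
        sum_le_sum fun i' _ => mul_le_mul_of_nonneg_right (hcol i') (hQ₀ i' a)
    _ = 2 * η := by rw [← mul_sum, hQ a, mul_one]

lemma exists_mul_mem_Kset_near {j k : ℕ} {I : Type} [Fintype I] (hj : 0 < j) (hk : 0 < k)
    {Q : Matrix (Fin j) I ℝ} (hQ : Q ∈ Kset j I) :
    ∃ R ∈ Kset j (Fin k), ∃ M ∈ Kset k I, ∀ a, ∑ i, |Q i a - (R * M) i a| ≤ 2 * (j / k) := by
  obtain ⟨R, hR, hRsq⟩ := exists_mem_Kset_sum_sq_ge hj k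
  refine ⟨R, hR, _, smul_transpose_mul_mem_Kset hj hk hR hQ, fun a => ?_⟩
  have hjR : (0 : ℝ) < j := by exact_mod_cast hj
  have hkR : (0 : ℝ) < k := by exact_mod_cast hk
  rw [Matrix.mul_smul, ← Matrix.mul_assoc, ← Matrix.smul_mul]
  refine sum_abs_sub_mul_le (fun i i' => ?_) (fun i' => ?_) (fun i => ?_) hQ.1 hQ.2.2 a
  · rw [Matrix.smul_apply, mul_apply]
    exact mul_nonneg (by positivity) (sum_nonneg fun t _ => mul_nonneg (hR.1 i t) (hR.1 i' t))
  · simp only [Matrix.smul_apply, smul_eq_mul, mul_apply, transpose_apply, ← mul_sum]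
    rw [sum_comm]
    simp only [← sum_mul, hR.2.2, one_mul, hR.2.1, Fintype.card_fin]
    field_simp
  · have hjk : (j : ℝ) / k * (k / j) = 1 := by field_simp
    have := mul_le_mul_of_nonneg_left (hRsq i) (div_nonneg hjR.le hkR.le)
    simp only [Matrix.smul_apply, smul_eq_mul, mul_apply, transpose_apply, ← sq]
    rwa [mul_sub, mul_one, hjk] at this

lemma exists_near_matShape {j k : ℕ} {I I' : Type} [Fintype I] [Fintype I'] (hj : 0 < j)
    (hk : 0 < k) {A : Matrix I I ℝ} {B : Matrix I' I' ℝ} (hA : ∀ a b, 0 ≤ A a b) {δ : ℝ}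
    (h : ∀ X ∈ matShape A k, ∃ Y ∈ matShape B k, l1 (X - Y) ≤ δ) :
    ∀ X ∈ matShape A j, ∃ Y ∈ matShape B j, l1 (X - Y) ≤ δ + 4 * gamma A * j / k := by
  rintro _ ⟨Q, hQ, rfl⟩
  obtain ⟨R, hR, M, hM, hnear⟩ := exists_mul_mem_Kset_near hj hk hQ
  obtain ⟨_, ⟨M', hM', rfl⟩, hMM'⟩ := h _ ⟨M, hM, rfl⟩
  refine ⟨R * M' * B * (R * M')ᵀ, ⟨R * M', mul_mem_Kset hk hR hM', rfl⟩, ?_⟩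
  have hRM := mul_mem_Kset hk hR hM
  have h₁ : l1 (Q * A * Qᵀ - R * M * A * (R * M)ᵀ) ≤ 2 * (2 * (j / k)) * gamma A :=
    l1_conj_sub_conj_le hA hQ.1 hQ.2.2 hRM.1 hRM.2.2 hnear
  have h₂ : l1 (R * M * A * (R * M)ᵀ - R * M' * B * (R * M')ᵀ) ≤ δ := by
    have hconj : R * M * A * (R * M)ᵀ - R * M' * B * (R * M')ᵀ =
        R * (M * A * Mᵀ - M' * B * M'ᵀ) * Rᵀ := by
      simp only [transpose_mul, Matrix.mul_assoc, Matrix.mul_sub, Matrix.sub_mul]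
    rw [hconj]
    exact (l1_mul_mul_transpose_le_l1 hR.1 hR.2.2 _).trans hMM'
  have hconst : 2 * (2 * ((j : ℝ) / k)) * gamma A = 4 * gamma A * j / k := by ring
  linarith [l1_sub_le_add (Q * A * Qᵀ) (R * M * A * (R * M)ᵀ) (R * M' * B * (R * M')ᵀ)]

lemma hdistLE_matShape_of_le {j k : ℕ} {I I' : Type} [Fintype I] [Fintype I'] (hj : 0 < j)
    (hk : 0 < k) {A : Matrix I I ℝ} {B : Matrix I' I' ℝ} (hA : ∀ a b, 0 ≤ A a b)
    (hB : ∀ a b, 0 ≤ B a b) {c δ : ℝ} (hγA : gamma A ≤ c) (hγB : gamma B ≤ c)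
    (h : hdistLE (matShape A k) (matShape B k) δ) :
    hdistLE (matShape A j) (matShape B j) (δ + 4 * c * j / k) := by
  have hle : ∀ {γ : ℝ}, γ ≤ c → δ + 4 * γ * j / k ≤ δ + 4 * c * j / k := fun hγ => by gcongr
  refine ⟨fun X hX => ?_, fun Y hY => ?_⟩
  · obtain ⟨Y, hY, hXY⟩ := exists_near_matShape hj hk hA h.1 X hX
    exact ⟨Y, hY, hXY.trans (hle hγA)⟩
  · obtain ⟨X, hX, hYX⟩ := exists_near_matShape hj hk hB h.symm.1 Y hY
    exact ⟨X, hX, (l1_sub_comm X Y).trans_le (hYX.trans (hle hγB))⟩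

lemma hdistLE_matShape_of_shapeTendsto {j k : ℕ} (hj : 0 < j) (hk : 0 < k) {c δ ε : ℝ}
    (hε : 0 < ε) {I : Type} [Fintype I] {A : Matrix I I ℝ} (hA : ∀ a b, 0 ≤ A a b)
    (hγA : gamma A ≤ c) {ι : ℕ → Type} [∀ n, Fintype (ι n)] {S : ∀ n, Matrix (ι n) (ι n) ℝ}
    (hS : ∀ n a b, 0 ≤ S n a b) (hγS : ∀ n, gamma (S n) ≤ c)
    {Lj : Set (Matrix (Fin j) (Fin j) ℝ)} {Lk : Set (Matrix (Fin k) (Fin k) ℝ)}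
    (hSj : ShapeTendsto (fun n => matShape (S n) j) Lj)
    (hSk : ShapeTendsto (fun n => matShape (S n) k) Lk) (h : hdistLE (matShape A k) Lk δ) :
    hdistLE (matShape A j) Lj (δ + 4 * c * j / k + 2 * ε) := by
  obtain ⟨Nj, hNj⟩ := hSj ε hε
  obtain ⟨Nk, hNk⟩ := hSk ε hε
  have hAS := h.trans (hNk (max Nj Nk) (le_max_right _ _)).symm
  exact ((hdistLE_matShape_of_le hj hk hA (hS _) hγA (hγS _) hAS).trans
    (hNj (max Nj Nk) (le_max_left _ _))).mono (le_of_eq (by ring))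

theorem stmt_16_general (c : ℝ) (k : ℕ → ℕ) (hmono : StrictMono k)
    (m : ℕ → ℕ) (S : ∀ i, Matrix (Fin (m i)) (Fin (m i)) ℝ)
    (hSnn : ∀ i a b, 0 ≤ S i a b) (hSγ : ∀ i, gamma (S i) ≤ c)
    (L : (j : ℕ) → Set (Matrix (Fin j) (Fin j) ℝ))
    (hL : ∀ j : ℕ, 0 < j → IsCompact (L j) ∧ ShapeTendsto (fun i => matShape (S i) j) (L j))
    (p : ℕ → ℕ) (X : ∀ i, Matrix (Fin (p i)) (Fin (p i)) ℝ)
    (hXnn : ∀ i a b, 0 ≤ X i a b) (hXγ : ∀ i, gamma (X i) ≤ c)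
    (hclose : ∀ i : ℕ, 1 ≤ i → hdistLE (matShape (X i) (k i)) (L (k i)) (1 / (i : ℝ))) :
    ∀ j : ℕ, 0 < j → ShapeTendsto (fun i => matShape (X i) j) (L j) := by
  intro j hj ε hε
  have hk : Tendsto k atTop atTop := hmono.tendsto_atTop
  have hsmall : Tendsto (fun i : ℕ => 1 / (i : ℝ) + 4 * c * j / k i) atTop (𝓝 0) := by
    simpa using tendsto_one_div_atTop_nhds_zero_nat.add
      ((tendsto_const_div_atTop_nhds_zero_nat (4 * c * j)).comp hk)
  obtain ⟨N, hN⟩ := eventually_atTop.1 ((hsmall.eventually (gt_mem_nhds (half_pos hε))).and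
    ((eventually_ge_atTop 1).and (hk.eventually_ge_atTop j)))
  refine ⟨N, fun i hi => ?_⟩
  obtain ⟨hlt, hi, hjk⟩ := hN i hi
  have hki : 0 < k i := hj.trans_le hjk
  exact (hdistLE_matShape_of_shapeTendsto hj hki (ε := ε / 4) (by positivity) (hXnn i) (hXγ i)
    hSnn hSγ (hL j hj).2 (hL (k i) hki).2 (hclose i hi)).mono (by linarith)

/-- If `(Sₙ)` is convergent with limit shapes `L k`, `k₁ < k₂ < ⋯`, and the
`(Xᵢ)` satisfy `dist(C(Xᵢ,kᵢ), L kᵢ) ≤ 1/i`, then `(Xᵢ)` is convergent with the same limit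
shapes. -/
theorem stmt_16 (c : ℝ) (hc : 0 < c) (k : ℕ → ℕ) (hmono : StrictMono k)
    (hkpos : ∀ i, 1 ≤ i → 0 < k i)
    (m : ℕ → ℕ) (S : ∀ i, Matrix (Fin (m i)) (Fin (m i)) ℝ)
    (hSnn : ∀ i a b, 0 ≤ S i a b) (hSγ : ∀ i, gamma (S i) ≤ c)
    (L : (j : ℕ) → Set (Matrix (Fin j) (Fin j) ℝ))
    (hL : ∀ j : ℕ, 0 < j → IsCompact (L j) ∧ ShapeTendsto (fun i => matShape (S i) j) (L j))
    (p : ℕ → ℕ) (X : ∀ i, Matrix (Fin (p i)) (Fin (p i)) ℝ)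
    (hXnn : ∀ i a b, 0 ≤ X i a b) (hXγ : ∀ i, gamma (X i) ≤ c)
    (hclose : ∀ i : ℕ, 1 ≤ i → hdistLE (matShape (X i) (k i)) (L (k i)) (1 / (i : ℝ))) :
    ∀ j : ℕ, 0 < j → ShapeTendsto (fun i => matShape (X i) j) (L j) :=
  stmt_16_general c k hmono m S hSnn hSγ L hL p X hXnn hXγ hclose
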